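/- Let k, n, λ, s, m be positive integers with n ≥ 2. If k = sn and there is an OA_λ(k,n) containing a row repeated m times, then m ≤ λn²/(k(n−1)+n). -/

import Mathlib

/-!
Fix a row `r` and let `d i` be the number of columns in which row `i` of the array agrees with
`r`. Counting incidences with single columns and with pairs of columns gives the first two
moments `∑ d = kλn` and `∑ d² = kλn + k(k-1)λ`. Since `(d - α)(d - α - 1) ≥ 0` for every
integer `α`, and each of the `m` copies of `r` has `d = k`, summing this quadratic yields
`m (k - α)(k - α - 1) ≤ λ (k(k-1) - 2αkn + (α² + α)n²)`. For `k = sn` and `α = s - 1` the right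
side collapses to `λ s n (n - 1)` and the left side to `m s (n - 1)(s (n - 1) + 1)`.
-/

/-- An orthogonal array `OA_λ(k,n)` of strength 2. -/
def IsOA (lam k n : ℕ) (A : Fin (lam * n ^ 2) → Fin k → Fin n) : Prop :=
  ∀ c₁ c₂ : Fin k, c₁ ≠ c₂ → ∀ x y : Fin n,
    (Finset.univ.filter (fun i => A i c₁ = x ∧ A i c₂ = y)).card = lam

open Finset

theorem Int.mul_sub_one_nonneg (z : ℤ) : 0 ≤ z * (z - 1) := by
  rcases le_or_gt z 0 with h | h <;> nlinarith

def agreement {N k n : ℕ} (A : Fin N → Fin k → Fin n) (r : Fin k → Fin n) (i : Fin N) : ℕ :=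
  #{c | A i c = r c}

theorem sum_agreement {N k n : ℕ} (A : Fin N → Fin k → Fin n) (r : Fin k → Fin n) :
    ∑ i, agreement A r i = ∑ c, #{i | A i c = r c} :=
  sum_card_bipartiteAbove_eq_sum_card_bipartiteBelow (fun i c => A i c = r c)
    (s := univ) (t := univ)

theorem sum_agreement_sq {N k n : ℕ} (A : Fin N → Fin k → Fin n) (r : Fin k → Fin n) :
    ∑ i, agreement A r i ^ 2 = ∑ p : Fin k × Fin k, #{i | A i p.1 = r p.1 ∧ A i p.2 = r p.2} := by
  have hsq : ∀ i, agreement A r i ^ 2 =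
      #{p : Fin k × Fin k | A i p.1 = r p.1 ∧ A i p.2 = r p.2} := by
    intro i
    rw [agreement, sq, ← card_product, ← filter_product, univ_product_univ]
  simp_rw [hsq]
  exact sum_card_bipartiteAbove_eq_sum_card_bipartiteBelow
    (fun i (p : Fin k × Fin k) => A i p.1 = r p.1 ∧ A i p.2 = r p.2) (s := univ) (t := univ)

namespace IsOA

variable {lam k n : ℕ} {A : Fin (lam * n ^ 2) → Fin k → Fin n}

theorem card_filter_apply_eq (hA : IsOA lam k n A) (hk : 2 ≤ k) (c : Fin k) (x : Fin n) :
    #{i | A i c = x} = lam * n := by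
  obtain ⟨c', hc'⟩ := Fintype.exists_ne_of_one_lt_card (by rw [Fintype.card_fin]; omega) c
  rw [card_eq_sum_card_fiberwise (f := fun i => A i c') (t := univ) fun _ _ => mem_univ _]
  simp_rw [filter_filter, hA c c' hc'.symm x, sum_const, card_univ, Fintype.card_fin,
    smul_eq_mul, mul_comm]

theorem card_filter_apply_eq_and_apply_eq (hA : IsOA lam k n A) (hk : 2 ≤ k)
    (r : Fin k → Fin n) (c₁ c₂ : Fin k) :
    #{i | A i c₁ = r c₁ ∧ A i c₂ = r c₂} = if c₁ = c₂ then lam * n else lam := by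
  split_ifs with h
  · subst h
    simpa only [and_self] using hA.card_filter_apply_eq hk c₁ (r c₁)
  · exact hA c₁ c₂ h (r c₁) (r c₂)

theorem sum_agreement_eq (hA : IsOA lam k n A) (hk : 2 ≤ k) (r : Fin k → Fin n) :
    ∑ i, agreement A r i = k * (lam * n) := by
  simp [sum_agreement, hA.card_filter_apply_eq hk]

theorem sum_agreement_sq_eq (hA : IsOA lam k n A) (hk : 2 ≤ k) (r : Fin k → Fin n) :
    ∑ i, agreement A r i ^ 2 = k * (lam * n + (k - 1) * lam) := by
  have hrow : ∀ c₁ : Fin k, ∑ c₂ : Fin k, (if c₁ = c₂ then lam * n else lam) =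
      lam * n + (k - 1) * lam := by
    intro c₁
    rw [sum_ite, sum_const, sum_const, filter_eq, filter_ne, card_erase_of_mem (mem_univ _)]
    simp
  rw [sum_agreement_sq, Fintype.sum_prod_type]
  simp [hA.card_filter_apply_eq_and_apply_eq hk, hrow]

theorem card_rows_eq_mul_le (hA : IsOA lam k n A) (hk : 2 ≤ k) (r : Fin k → Fin n) (α : ℤ) :
    (#{i | A i = r} : ℤ) * ((k - α) * (k - α - 1)) ≤
      lam * (k * (k - 1) - 2 * α * k * n + (α ^ 2 + α) * n ^ 2) := by
  have hcopy : ∀ i ∈ ({i | A i = r} : Finset _), agreement A r i = k := by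
    intro i hi
    rw [agreement, (mem_filter.mp hi).2, filter_true_of_mem fun _ _ => rfl, card_univ,
      Fintype.card_fin]
  have h₁ : ∑ i, (agreement A r i : ℤ) = k * (lam * n) := by
    exact_mod_cast hA.sum_agreement_eq hk r
  have h₂ : ∑ i, (agreement A r i : ℤ) ^ 2 = k * (lam * n + (k - 1) * lam) := by
    have := congrArg (Nat.cast : ℕ → ℤ) (hA.sum_agreement_sq_eq hk r)
    push_cast [Nat.cast_sub (by omega : 1 ≤ k)] at this
    exact this
  calc (#{i | A i = r} : ℤ) * ((k - α) * (k - α - 1))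
      = ∑ i ∈ {i | A i = r}, ((agreement A r i : ℤ) - α) * ((agreement A r i : ℤ) - α - 1) := by
        rw [sum_congr rfl fun i hi => by rw [hcopy i hi], sum_const, nsmul_eq_mul]
    _ ≤ ∑ i, ((agreement A r i : ℤ) - α) * ((agreement A r i : ℤ) - α - 1) :=
        sum_le_sum_of_subset_of_nonneg (subset_univ _) fun _ _ _ => Int.mul_sub_one_nonneg _
    _ = ∑ i, (agreement A r i : ℤ) ^ 2 - (2 * α + 1) * ∑ i, (agreement A r i : ℤ)
          + (lam * n ^ 2 : ℕ) * (α * (α + 1)) := by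
        simp_rw [show ∀ x : ℤ, (x - α) * (x - α - 1) = x ^ 2 - (2 * α + 1) * x + α * (α + 1)
          from fun x => by ring]
        rw [sum_add_distrib, sum_sub_distrib, ← mul_sum, sum_const, card_univ, Fintype.card_fin,
          nsmul_eq_mul]
    _ = lam * (k * (k - 1) - 2 * α * k * n + (α ^ 2 + α) * n ^ 2) := by
        rw [h₁, h₂]; push_cast; ring

end IsOA

theorem stmt14_general (k n lam s m : ℕ) (hn : 2 ≤ n) (hs : 0 < s)
    (hks : k = s * n)
    (A : Fin (lam * n ^ 2) → Fin k → Fin n) (hA : IsOA lam k n A)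
    (r : Fin k → Fin n)
    (hr : (Finset.univ.filter (fun i => A i = r)).card = m) :
    m * (k * (n - 1) + n) ≤ lam * n ^ 2 := by
  subst hks
  have key := hA.card_rows_eq_mul_le (by nlinarith) r (s - 1)
  rw [hr] at key
  have hpos : (0 : ℤ) < s * (n - 1) := mul_pos (by omega) (by omega)
  have hcancel : (m : ℤ) * (s * (n - 1) + 1) ≤ lam * n :=
    le_of_mul_le_mul_right (by push_cast at key; linear_combination key) hpos
  zify [show 1 ≤ n by omega]
  calc (m : ℤ) * (s * n * (n - 1) + n) = n * (m * (s * (n - 1) + 1)) := by ring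
    _ ≤ n * (lam * n) := mul_le_mul_of_nonneg_left hcancel (by positivity)
    _ = lam * n ^ 2 := by ring

theorem stmt14 (k n lam s m : ℕ) (hn : 2 ≤ n) (hs : 0 < s) (hlam : 0 < lam)
    (hm : 0 < m) (hks : k = s * n)
    (A : Fin (lam * n ^ 2) → Fin k → Fin n) (hA : IsOA lam k n A)
    (r : Fin k → Fin n)
    (hr : (Finset.univ.filter (fun i => A i = r)).card = m) :
    m * (k * (n - 1) + n) ≤ lam * n ^ 2 :=
  stmt14_general k n lam s m hn hs hks A hA r hr
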